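/- Let C be a triangulated category equipped with a bounded t-structure. Then C is idempotent complete, i.e. every idempotent endomorphism e : X → X with e ∘ e = e splits as a composite X → Y → X of a retraction followed by a section. -/

import Mathlib

open CategoryTheory CategoryTheory.Limits CategoryTheory.Triangulated
open CategoryTheory.Pretriangulated

namespace TSplitAux

variable {C : Type*} [Category C] [Preadditive C] [HasZeroObject C] [HasShift C ℤ]
  [∀ n : ℤ, (CategoryTheory.shiftFunctor C n).Additive] [Pretriangulated C]

lemma hom_zero (t : TStructure C) {X Y : C} {n m : ℤ} (hnm : n < m)
    (hX : t.le n X) (hY : t.ge m Y) (f : X ⟶ Y) : f = 0 := by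
  have h1 : t.le 0 (X⟦n⟧) := t.le_shift n n 0 (by omega) X hX
  have h2 : t.ge 1 (Y⟦n⟧) :=
    t.ge_antitone (show (1:ℤ) ≤ m - n by omega) _ (t.ge_shift m n (m - n) (by omega) Y hY)
  have h3 : (shiftFunctor C n).map f = 0 := t.zero' _ h1 h2
  apply (shiftFunctor C n).map_injective
  rw [h3, Functor.map_zero]

lemma isIso_mor₂_of_mor₁_eq_zero {A Q B : C} {α : A ⟶ Q} {π : Q ⟶ B} {β : B ⟶ A⟦(1:ℤ)⟧}
    (hT : Triangle.mk α π β ∈ distTriang C) (hα : α = 0)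
    (hzero : ∀ g : A⟦(1:ℤ)⟧ ⟶ B, g = 0) : IsIso π := by
  have h1 : 𝟙 (A⟦(1:ℤ)⟧) = 0 := by
    obtain ⟨g, hg⟩ := Triangle.coyoneda_exact₃ _ (rot_of_distTriang _ hT) (𝟙 (A⟦(1:ℤ)⟧))
      (by change 𝟙 (A⟦(1:ℤ)⟧) ≫ (-(α⟦(1:ℤ)⟧')) = 0; rw [hα, Functor.map_zero, neg_zero, comp_zero])
    rw [hg, show g = 0 from hzero g]; exact zero_comp
  have hA : IsZero A := by
    rw [IsZero.iff_id_eq_zero]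
    apply (shiftFunctor C (1:ℤ)).map_injective
    rw [CategoryTheory.Functor.map_id, Functor.map_zero]; exact h1
  exact (Triangle.isZero₁_iff_isIso₂ _ hT).mp hA

lemma isIso_mor₁_of_mor₂_eq_zero {A Q B : C} {α : A ⟶ Q} {π : Q ⟶ B} {β : B ⟶ A⟦(1:ℤ)⟧}
    (hT : Triangle.mk α π β ∈ distTriang C) (hπ : π = 0)
    (hzero : ∀ g : A⟦(1:ℤ)⟧ ⟶ B, g = 0) : IsIso α := by
  have hB : IsZero B := by
    rw [IsZero.iff_id_eq_zero]
    obtain ⟨g, hg⟩ := Triangle.yoneda_exact₃ _ hT (𝟙 B) (by change π ≫ 𝟙 B = 0; rw [hπ, zero_comp])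
    rw [hg, show g = 0 from hzero g]; exact comp_zero
  exact (Triangle.isZero₃_iff_isIso₁ _ hT).mp hB

/-- `GE n` is closed under extensions. -/
lemma ge_ext (t : TStructure C) {n : ℤ} (T : Triangle C) (hT : T ∈ distTriang C)
    (h₁ : t.ge n T.obj₁) (h₃ : t.ge n T.obj₃) : t.ge n T.obj₂ := by
  obtain ⟨A, B, hA, hB, α, π, β, hT2⟩ := t.exists_triangle T.obj₂ (n-1) n (by omega)
  have hα : α = 0 := by
    obtain ⟨α', hα'⟩ := Triangle.coyoneda_exact₂ _ hT α (hom_zero t (by omega) hA h₃ _)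
    rw [hα', hom_zero t (show n-1 < n by omega) hA h₁ α', zero_comp]
  have : IsIso π := isIso_mor₂_of_mor₁_eq_zero hT2 hα (fun g => hom_zero t (by omega)
    (t.le_shift (n-1) 1 (n-2) (by omega) A hA) hB g)
  exact (t.ge n).prop_of_iso (asIso π).symm hB

/-- `LE n` is closed under extensions. -/
lemma le_ext (t : TStructure C) {n : ℤ} (T : Triangle C) (hT : T ∈ distTriang C)
    (h₁ : t.le n T.obj₁) (h₃ : t.le n T.obj₃) : t.le n T.obj₂ := by
  obtain ⟨A, B, hA, hB, α, π, β, hT2⟩ := t.exists_triangle T.obj₂ n (n+1) rfl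
  have hπ : π = 0 := by
    obtain ⟨g, hg⟩ := Triangle.yoneda_exact₂ _ hT π (hom_zero t (by omega) h₁ hB _)
    rw [hg, hom_zero t (show n < n+1 by omega) h₃ hB g, comp_zero]
  have : IsIso α := isIso_mor₁_of_mor₂_eq_zero hT2 hπ (fun g => hom_zero t (by omega)
    (t.le_shift n 1 (n-1) (by omega) A hA) hB g)
  exact (t.le n).prop_of_iso (asIso α) hA

/-- `GE n` is closed under retracts. -/
lemma ge_retract (t : TStructure C) {n : ℤ} {W W₀ : C} (i : W₀ ⟶ W) (q : W ⟶ W₀)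
    (hiq : i ≫ q = 𝟙 W₀) (hW : t.ge n W) : t.ge n W₀ := by
  obtain ⟨A, B, hA, hB, α, π, β, hT2⟩ := t.exists_triangle W₀ (n-1) n (by omega)
  have hα : α = 0 := by
    have h1 : α ≫ i = 0 := hom_zero t (show n-1 < n by omega) hA hW _
    calc α = α ≫ (i ≫ q) := by rw [hiq, Category.comp_id]
    _ = (α ≫ i) ≫ q := by rw [Category.assoc]
    _ = 0 := by rw [h1, zero_comp]
  have : IsIso π := isIso_mor₂_of_mor₁_eq_zero hT2 hα (fun g => hom_zero t (by omega)
    (t.le_shift (n-1) 1 (n-2) (by omega) A hA) hB g)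
  exact (t.ge n).prop_of_iso (asIso π).symm hB

/-- `LE n` is closed under retracts. -/
lemma le_retract (t : TStructure C) {n : ℤ} {W W₀ : C} (i : W₀ ⟶ W) (q : W ⟶ W₀)
    (hiq : i ≫ q = 𝟙 W₀) (hW : t.le n W) : t.le n W₀ := by
  obtain ⟨A, B, hA, hB, α, π, β, hT2⟩ := t.exists_triangle W₀ n (n+1) rfl
  have hπ : π = 0 := by
    have h1 : q ≫ π = 0 := hom_zero t (show n < n+1 by omega) hW hB _
    calc π = i ≫ q ≫ π := by rw [← Category.assoc, hiq, Category.id_comp]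
    _ = 0 := by rw [h1, comp_zero]
  have : IsIso α := isIso_mor₁_of_mor₂_eq_zero hT2 hπ (fun g => hom_zero t (by omega)
    (t.le_shift n 1 (n-1) (by omega) A hA) hB g)
  exact (t.le n).prop_of_iso (asIso α) hA


section
variable (t : TStructure C)

/-- The base case: an idempotent on an object concentrated in a single degree splits. -/
lemma split_base {X : C} {a : ℤ} (hXge : t.ge a X) (hXle : t.le a X)
    (e : X ⟶ X) (he : e ≫ e = e) :
    ∃ (Y : C) (i : Y ⟶ X) (q : X ⟶ Y), i ≫ q = 𝟙 Y ∧ q ≫ i = e := by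
  obtain ⟨Z, g, h, hT⟩ := distinguished_cocone_triangle (𝟙 X - e)
  obtain ⟨A, B, hA, hB, α, π, β, hT2⟩ := t.exists_triangle Z (a-1) a (by omega)
  -- e factors through g
  obtain ⟨θ, hθ⟩ : ∃ θ : Z ⟶ X, e = g ≫ θ :=
    Triangle.yoneda_exact₂ _ hT e (by
      change (𝟙 X - e) ≫ e = 0; rw [Preadditive.sub_comp, Category.id_comp, he, sub_self])
  have heg : e ≫ g = g := by
    have h0 : (𝟙 X - e) ≫ g = 0 := comp_distTriang_mor_zero₁₂ _ hT
    rw [Preadditive.sub_comp, Category.id_comp, sub_eq_zero] at h0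
    exact h0.symm
  -- θ descends to v : B ⟶ X
  obtain ⟨v, hv⟩ : ∃ v : B ⟶ X, θ = π ≫ v :=
    Triangle.yoneda_exact₂ _ hT2 θ (hom_zero t (show a-1 < a by omega) hA hXge _)
  -- the defect of θ factors through h
  obtain ⟨σ, hσ⟩ : ∃ σ : X⟦(1:ℤ)⟧ ⟶ Z, θ ≫ g - 𝟙 Z = h ≫ σ :=
    Triangle.yoneda_exact₃ _ hT (θ ≫ g - 𝟙 Z) (by
      change g ≫ (θ ≫ g - 𝟙 Z) = 0
      rw [Preadditive.comp_sub, Category.comp_id, ← Category.assoc, ← hθ, heg, sub_self])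
  have hσπ : σ ≫ π = 0 :=
    hom_zero t (show a-1 < a by omega) (t.le_shift a 1 (a-1) (by omega) X hXle) hB _
  -- v ≫ (g ≫ π) = 𝟙 B
  have hδ : π ≫ (v ≫ (g ≫ π) - 𝟙 B) = 0 := by
    rw [Preadditive.comp_sub, Category.comp_id]
    have : π ≫ v ≫ g ≫ π = ((θ ≫ g - 𝟙 Z) + 𝟙 Z) ≫ π := by
      rw [sub_add_cancel, ← Category.assoc, ← Category.assoc, ← hv]
    rw [this, Preadditive.add_comp, Category.id_comp, hσ, Category.assoc, hσπ, comp_zero, zero_add,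
      sub_self]
  obtain ⟨ρ, hρ⟩ := Triangle.yoneda_exact₃ _ hT2 (v ≫ (g ≫ π) - 𝟙 B) hδ
  have hδ0 : v ≫ (g ≫ π) - 𝟙 B = 0 := by
    rw [hρ, hom_zero t (show a-2 < a by omega)
      (t.le_shift (a-1) 1 (a-2) (by omega) A hA) hB ρ]; exact comp_zero
  refine ⟨B, v, g ≫ π, by rwa [sub_eq_zero] at hδ0, ?_⟩
  rw [Category.assoc, ← hv, ← hθ]


lemma split_succ {X : C} {a b : ℤ} (hge : t.ge a X) (hle : t.le b X)
    (k : ℕ)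
    (ih : ∀ (X' : C) (a' b' : ℤ), t.ge a' X' → t.le b' X' → b' ≤ a' + k →
      ∀ e : X' ⟶ X', e ≫ e = e →
      ∃ (Y : C) (i : Y ⟶ X') (q : X' ⟶ Y), i ≫ q = 𝟙 Y ∧ q ≫ i = e)
    (hab : b = a + k + 1)
    (e : X ⟶ X) (he : e ≫ e = e) :
    ∃ (Y : C) (i : Y ⟶ X) (q : X ⟶ Y), i ≫ q = 𝟙 Y ∧ q ≫ i = e := by
  obtain ⟨W, V, hWle, hVge, f, p, w, hTX⟩ := t.exists_triangle X a (a+1) rfl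
  have hWge : t.ge a W := by
    refine ge_ext t (Triangle.mk f p w).invRotate (inv_rot_of_distTriang _ hTX) ?_ hge
    exact t.ge_antitone (show a ≤ a + 2 by omega) _
      (t.ge_shift (a+1) (-1) (a+2) (by omega) V hVge)
  have hVle : t.le b V := by
    refine le_ext t (Triangle.mk f p w).rotate (rot_of_distTriang _ hTX) hle ?_
    exact t.le_monotone (show a - 1 ≤ b by omega) _
      (t.le_shift a 1 (a-1) (by omega) W hWle)
  -- cancellation lemmas
  have cancelW : ∀ κ : W ⟶ W, κ ≫ f = 0 → κ = 0 := by
    intro κ hκ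
    obtain ⟨κ', hκ'⟩ := Triangle.coyoneda_exact₂ _ (inv_rot_of_distTriang _ hTX) κ hκ
    have : κ' = 0 := hom_zero t (show a < a + 2 by omega) hWle
      (t.ge_shift (a+1) (-1) (a+2) (by omega) V hVge) κ'
    rw [hκ', this]; exact zero_comp
  have cancelV : ∀ κ : V ⟶ V, p ≫ κ = 0 → κ = 0 := by
    intro κ hκ
    obtain ⟨ρ, hρ⟩ := Triangle.yoneda_exact₃ _ hTX κ hκ
    have : ρ = 0 := hom_zero t (show a - 1 < a + 1 by omega)
      (t.le_shift a 1 (a-1) (by omega) W hWle) hVge ρ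
    rw [hρ, this]; exact comp_zero
  -- the induced idempotent on W
  obtain ⟨eW, heW⟩ : ∃ eW : W ⟶ W, f ≫ e = eW ≫ f :=
    Triangle.coyoneda_exact₂ _ hTX (f ≫ e) (by
      change (f ≫ e) ≫ p = 0
      rw [Category.assoc]
      exact hom_zero t (show a < a + 1 by omega) hWle hVge _)
  -- the induced idempotent on V, compatible with the connecting morphism
  obtain ⟨eV, heV, heVw⟩ : ∃ eV : V ⟶ V, p ≫ eV = e ≫ p ∧ w ≫ eW⟦(1:ℤ)⟧' = eV ≫ w :=
    complete_distinguished_triangle_morphism _ _ hTX hTX eW e heW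
  -- heV : p ≫ eV = e ≫ p,  heVw : w ≫ eW⟦1⟧' = eV ≫ w
  have heW2 : eW ≫ eW = eW := by
    have h1 : (eW ≫ eW) ≫ f = eW ≫ f := by
      calc (eW ≫ eW) ≫ f = eW ≫ (eW ≫ f) := by rw [Category.assoc]
      _ = eW ≫ (f ≫ e) := by rw [heW]
      _ = (eW ≫ f) ≫ e := by rw [Category.assoc]
      _ = (f ≫ e) ≫ e := by rw [heW]
      _ = f ≫ (e ≫ e) := by rw [Category.assoc]
      _ = eW ≫ f := by rw [he, heW]
    have := cancelW (eW ≫ eW - eW) (by rw [Preadditive.sub_comp, h1, sub_self])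
    rwa [sub_eq_zero] at this
  have heV2 : eV ≫ eV = eV := by
    have h1 : p ≫ (eV ≫ eV) = p ≫ eV := by
      calc p ≫ (eV ≫ eV) = (p ≫ eV) ≫ eV := by rw [Category.assoc]
      _ = (e ≫ p) ≫ eV := by rw [heV]
      _ = e ≫ (p ≫ eV) := by rw [Category.assoc]
      _ = e ≫ (e ≫ p) := by rw [heV]
      _ = (e ≫ e) ≫ p := by rw [Category.assoc]
      _ = p ≫ eV := by rw [he, heV]
    have := cancelV (eV ≫ eV - eV) (by rw [Preadditive.comp_sub, h1, sub_self])
    rwa [sub_eq_zero] at this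
  -- split the two pieces using the induction hypothesis
  obtain ⟨W₀, iW, qW, hiW, hqW⟩ := ih W a a hWge hWle (by omega) eW heW2
  obtain ⟨V₀, iV, qV, hiV, hqV⟩ := ih V (a+1) b hVge hVle (by omega) eV heV2
  have hW0le : t.le a W₀ := le_retract t iW qW hiW hWle
  have hW0ge : t.ge a W₀ := ge_retract t iW qW hiW hWge
  have hV0ge : t.ge (a+1) V₀ := ge_retract t iV qV hiV hVge
  have hV0le : t.le b V₀ := le_retract t iV qV hiV hVle
  -- absorption identities
  have habs1 : eW ≫ qW = qW := by rw [← hqW, Category.assoc, hiW, Category.comp_id]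
  have habs2 : iW ≫ eW = iW := by rw [← hqW, ← Category.assoc, hiW, Category.id_comp]
  have habs3 : eV ≫ qV = qV := by rw [← hqV, Category.assoc, hiV, Category.comp_id]
  have habs4 : iV ≫ eV = iV := by rw [← hqV, ← Category.assoc, hiV, Category.id_comp]
  -- build the candidate direct summand Y
  set δ : V₀ ⟶ W₀⟦(1:ℤ)⟧ := iV ≫ w ≫ qW⟦1⟧' with hδ
  obtain ⟨Y, f₀, p₀, hT0⟩ := distinguished_cocone_triangle₂ δ
  have compat1 : w ≫ qW⟦(1:ℤ)⟧' = qV ≫ δ := by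
    calc w ≫ qW⟦(1:ℤ)⟧' = w ≫ (eW ≫ qW)⟦(1:ℤ)⟧' := by rw [habs1]
    _ = (w ≫ eW⟦(1:ℤ)⟧') ≫ qW⟦(1:ℤ)⟧' := by rw [Functor.map_comp, Category.assoc]
    _ = (qV ≫ iV) ≫ w ≫ qW⟦(1:ℤ)⟧' := by rw [heVw, hqV, Category.assoc]
    _ = qV ≫ δ := by rw [hδ]; simp only [Category.assoc]
  have compat2 : δ ≫ iW⟦(1:ℤ)⟧' = iV ≫ w := by
    calc δ ≫ iW⟦(1:ℤ)⟧' = iV ≫ w ≫ (qW ≫ iW)⟦(1:ℤ)⟧' := by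
          rw [hδ]; simp only [Category.assoc, ← Functor.map_comp]
    _ = iV ≫ (w ≫ eW⟦(1:ℤ)⟧') := by rw [hqW]
    _ = (iV ≫ eV) ≫ w := by rw [heVw, Category.assoc]
    _ = iV ≫ w := by rw [habs4]
  obtain ⟨φ, hφ1, hφ2⟩ : ∃ φ : X ⟶ Y, f ≫ φ = qW ≫ f₀ ∧ p ≫ qV = φ ≫ p₀ :=
    complete_distinguished_triangle_morphism₂ _ _ hTX hT0 qW qV compat1
  -- hφ1 : f ≫ φ = qW ≫ f₀,  hφ2 : p ≫ qV = φ ≫ p₀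
  obtain ⟨ψ, hψ1, hψ2⟩ : ∃ ψ : Y ⟶ X, f₀ ≫ ψ = iW ≫ f ∧ p₀ ≫ iV = ψ ≫ p :=
    complete_distinguished_triangle_morphism₂ _ _ hT0 hTX iW iV compat2
  -- hψ1 : f₀ ≫ ψ = iW ≫ f,  hψ2 : p₀ ≫ iV = ψ ≫ p
  have cancelW0 : ∀ κ : W₀ ⟶ W₀, κ ≫ f₀ = 0 → κ = 0 := by
    intro κ hκ
    obtain ⟨κ', hκ'⟩ := Triangle.coyoneda_exact₂ _ (inv_rot_of_distTriang _ hT0) κ hκ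
    have : κ' = 0 := hom_zero t (show a < a + 2 by omega) hW0le
      (t.ge_shift (a+1) (-1) (a+2) (by omega) V₀ hV0ge) κ'
    rw [hκ', this]; exact zero_comp
  have sqzY : ∀ m : Y ⟶ Y, f₀ ≫ m = 0 → m ≫ p₀ = 0 → m ≫ m = 0 := by
    intro m h1 h2
    obtain ⟨γ, hγ₀⟩ : ∃ γ : Y ⟶ W₀, m = γ ≫ f₀ := Triangle.coyoneda_exact₂ _ hT0 m h2
    have hγ : m = γ ≫ f₀ := hγ₀
    have h3 : f₀ ≫ γ = 0 := cancelW0 _ (by rw [Category.assoc, ← hγ, h1])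
    rw [hγ]
    calc (γ ≫ f₀) ≫ γ ≫ f₀ = γ ≫ (f₀ ≫ γ) ≫ f₀ := by simp only [Category.assoc]
    _ = 0 := by rw [h3, zero_comp, comp_zero]
  have sqzX : ∀ m : X ⟶ X, f ≫ m = 0 → m ≫ p = 0 → m ≫ m = 0 := by
    intro m h1 h2
    obtain ⟨γ, hγ₀⟩ : ∃ γ : X ⟶ W, m = γ ≫ f := Triangle.coyoneda_exact₂ _ hTX m h2
    have hγ : m = γ ≫ f := hγ₀
    have h3 : f ≫ γ = 0 := cancelW _ (by rw [Category.assoc, ← hγ, h1])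
    rw [hγ]
    calc (γ ≫ f) ≫ γ ≫ f = γ ≫ (f ≫ γ) ≫ f := by simp only [Category.assoc]
    _ = 0 := by rw [h3, zero_comp, comp_zero]
  -- the comparison endomorphism η of Y
  set η : Y ⟶ Y := ψ ≫ e ≫ φ with hη
  have hf₀η : f₀ ≫ η = f₀ := by
    rw [hη, ← Category.assoc, hψ1, Category.assoc, ← Category.assoc f e φ,
      heW, Category.assoc, hφ1, ← Category.assoc, ← Category.assoc, habs2, hiW,
      Category.id_comp]
  have hηp₀ : η ≫ p₀ = p₀ := by
    rw [hη, Category.assoc, Category.assoc, ← hφ2, ← Category.assoc e p qV,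
      ← heV, ← Category.assoc, ← Category.assoc, ← hψ2]
    rw [Category.assoc, Category.assoc, habs3, hiV, Category.comp_id]
  -- η is invertible with inverse ζ
  have hmm : (η - 𝟙 Y) ≫ (η - 𝟙 Y) = 0 := sqzY _
    (by rw [Preadditive.comp_sub, hf₀η, Category.comp_id, sub_self])
    (by rw [Preadditive.sub_comp, hηp₀, Category.id_comp, sub_self])
  set ζ : Y ⟶ Y := 𝟙 Y + 𝟙 Y - η with hζ
  have hηexp : η ≫ η - η - η + 𝟙 Y = 0 := by
    calc η ≫ η - η - η + 𝟙 Y = (η - 𝟙 Y) ≫ (η - 𝟙 Y) := by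
          simp only [Preadditive.sub_comp, Preadditive.comp_sub, Category.comp_id,
            Category.id_comp]
          abel
    _ = 0 := hmm
  have hηζ : η ≫ ζ = 𝟙 Y := by
    rw [hζ, Preadditive.comp_sub, Preadditive.comp_add, Category.comp_id]
    have : η ≫ η = η + η - 𝟙 Y := by
      have := hηexp; rw [← sub_eq_zero]; rw [← sub_eq_zero] at this ⊢
      abel_nf
      abel_nf at hηexp
      linear_combination (norm := abel_nf) hηexp
    rw [this]; abel
  have hf₀ζ : f₀ ≫ ζ = f₀ := by
    rw [hζ, Preadditive.comp_sub, Preadditive.comp_add, Category.comp_id, hf₀η]; abel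
  have hζp₀ : ζ ≫ p₀ = p₀ := by
    rw [hζ, Preadditive.sub_comp, Preadditive.add_comp, Category.id_comp, hηp₀]; abel
  -- the splitting maps : i = ψ ≫ e : Y ⟶ X and q = e ≫ φ ≫ ζ : X ⟶ Y
  have hst : (ψ ≫ e) ≫ (e ≫ φ ≫ ζ) = 𝟙 Y := by
    have h1 : (ψ ≫ e) ≫ (e ≫ φ ≫ ζ) = (ψ ≫ (e ≫ e) ≫ φ) ≫ ζ := by
      simp only [Category.assoc]
    rw [h1, he, ← hη]
    exact hηζ
  have hq1 : f ≫ (e ≫ φ ≫ ζ) = qW ≫ f₀ := by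
    slice_lhs 1 2 => rw [heW]
    slice_lhs 2 3 => rw [hφ1]
    slice_lhs 1 2 => rw [habs1]
    slice_lhs 2 3 => rw [hf₀ζ]
  have hs1 : (ψ ≫ e) ≫ p = p₀ ≫ iV := by
    slice_lhs 2 3 => rw [← heV]
    slice_lhs 1 2 => rw [← hψ2]
    slice_lhs 2 3 => rw [habs4]
  have hA : f ≫ ((e ≫ φ ≫ ζ) ≫ (ψ ≫ e)) = f ≫ e := by
    rw [← Category.assoc, hq1]
    slice_lhs 2 3 => rw [hψ1]
    slice_lhs 1 2 => rw [hqW]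
    slice_lhs 1 2 => rw [← heW]
    slice_lhs 2 3 => rw [he]
  have hB : ((e ≫ φ ≫ ζ) ≫ (ψ ≫ e)) ≫ p = e ≫ p := by
    rw [Category.assoc, hs1]
    slice_lhs 3 4 => rw [hζp₀]
    slice_lhs 2 3 => rw [← hφ2]
    slice_lhs 3 4 => rw [hqV]
    slice_lhs 2 3 => rw [heV]
    slice_lhs 1 2 => rw [he]
  have hec : e ≫ ((e ≫ φ ≫ ζ) ≫ (ψ ≫ e)) = (e ≫ φ ≫ ζ) ≫ (ψ ≫ e) := by
    calc e ≫ ((e ≫ φ ≫ ζ) ≫ (ψ ≫ e)) = ((e ≫ e) ≫ φ ≫ ζ) ≫ (ψ ≫ e) := by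
          simp only [Category.assoc]
    _ = (e ≫ φ ≫ ζ) ≫ (ψ ≫ e) := by rw [he]
  have hce : ((e ≫ φ ≫ ζ) ≫ (ψ ≫ e)) ≫ e = (e ≫ φ ≫ ζ) ≫ (ψ ≫ e) := by
    calc ((e ≫ φ ≫ ζ) ≫ (ψ ≫ e)) ≫ e = (e ≫ φ ≫ ζ) ≫ (ψ ≫ (e ≫ e)) := by
          simp only [Category.assoc]
    _ = (e ≫ φ ≫ ζ) ≫ (ψ ≫ e) := by rw [he]
  have hcc : ((e ≫ φ ≫ ζ) ≫ (ψ ≫ e)) ≫ ((e ≫ φ ≫ ζ) ≫ (ψ ≫ e))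
      = (e ≫ φ ≫ ζ) ≫ (ψ ≫ e) := by
    calc ((e ≫ φ ≫ ζ) ≫ (ψ ≫ e)) ≫ ((e ≫ φ ≫ ζ) ≫ (ψ ≫ e))
        = (e ≫ φ ≫ ζ) ≫ ((ψ ≫ e) ≫ (e ≫ φ ≫ ζ)) ≫ (ψ ≫ e) := by
          simp only [Category.assoc]
    _ = (e ≫ φ ≫ ζ) ≫ 𝟙 Y ≫ (ψ ≫ e) := by rw [hst]
    _ = (e ≫ φ ≫ ζ) ≫ (ψ ≫ e) := by rw [Category.id_comp]
  set c : X ⟶ X := (e ≫ φ ≫ ζ) ≫ (ψ ≫ e) with hc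
  have hνν : (c - e) ≫ (c - e) = 0 := sqzX _
    (by rw [Preadditive.comp_sub, hA, sub_self])
    (by rw [Preadditive.sub_comp, hB, sub_self])
  have hceq : c = e := by
    have h4 : c ≫ c - c ≫ e - e ≫ c + e ≫ e = 0 := by
      calc c ≫ c - c ≫ e - e ≫ c + e ≫ e = (c - e) ≫ (c - e) := by
            simp only [Preadditive.sub_comp, Preadditive.comp_sub]; abel
      _ = 0 := hνν
    rw [hcc, hce, hec, he] at h4
    have h5 : e - c = 0 := by rw [← h4]; abel
    rw [sub_eq_zero] at h5
    exact h5.symm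
  exact ⟨Y, ψ ≫ e, e ≫ φ ≫ ζ, hst, by rw [← hc]; exact hceq⟩


lemma split : ∀ (k : ℕ) (X : C) (a b : ℤ), t.ge a X → t.le b X →
    b ≤ a + k → ∀ e : X ⟶ X, e ≫ e = e →
    ∃ (Y : C) (i : Y ⟶ X) (q : X ⟶ Y), i ≫ q = 𝟙 Y ∧ q ≫ i = e := by
  intro k
  induction k with
  | zero =>
    intro X a b hge hle hba e he
    exact split_base t hge
      (t.le_monotone (show b ≤ a by simpa using hba) X hle) e he
  | succ k ih =>
    intro X a b hge hle hba e he
    by_cases hk : b ≤ a + k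
    · exact ih X a b hge hle hk e he
    · exact split_succ t hge hle k ih (by push_cast at hba ⊢; omega) e he

end

end TSplitAux

/-- A triangulated category equipped with a bounded t-structure is idempotent
complete. Here a t-structure `t` on `C` is *bounded* if every object `X` of
`C` satisfies `X ∈ C_{≥ -n} ∩ C_{≤ n}` for some natural number `n`. -/
theorem isIdempotentComplete_of_bounded_tStructure
    {C : Type*} [Category C] [Preadditive C] [HasZeroObject C] [HasShift C ℤ]
    [∀ n : ℤ, (CategoryTheory.shiftFunctor C n).Additive]
    [Pretriangulated C] [IsTriangulated C]
    (t : TStructure C)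
    (bounded : ∀ X : C, ∃ n : ℕ, t.ge (-(n : ℤ)) X ∧ t.le (n : ℤ) X) :
    IsIdempotentComplete C := by
  constructor
  intro X p hp
  obtain ⟨n, hge, hle⟩ := bounded X
  exact TSplitAux.split t (2*n) X (-(n:ℤ)) (n:ℤ) hge hle (by push_cast; omega) p hp
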